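/- arXiv:1010.2985 — 3 statements merged into one kernel-verified Lean document; each statement's English description precedes it below -/
import Mathlib

section
/- Let D be a finite twin-free digraph containing at least one pair of symmetric arcs (both u→v and v→u for some u ≠ v). Then D admits an identifying code of size at most |V(D)| - 1. -/
def inBall {V : Type} (A : V → V → Prop) (x : V) : Set V := insert x {w | A w x}

def IsSepCode {V : Type} (A : V → V → Prop) (C : Set V) : Prop :=
  ∀ u v : V, u ≠ v → inBall A u ∩ C ≠ inBall A v ∩ C

def IsIdCode {V : Type} (A : V → V → Prop) (C : Set V) : Prop :=
  (∀ u : V, (inBall A u ∩ C).Nonempty) ∧ IsSepCode A C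

def TwinFree {V : Type} (A : V → V → Prop) : Prop :=
  ∀ u v : V, u ≠ v → inBall A u ≠ inBall A v

/-!
If no `{w}ᶜ` is an identifying code, twin-freeness forces, for every vertex `w`, a ball
`B x = {w} ⊔ T` with `T` empty or a ball. Over `𝔽₂` these identities put every unit vector
`e_w = 1_{B x} - 1_T` in the span of the `n` ball indicators, which therefore form a basis;
comparing coordinates in `1_{B z} = ∑_{w ∈ B z} e_w` shows that every ball `B z` is such a `B x`
for some `w ∈ B z`. Induction on ball size then gives `B x_a ⊆ B z` whenever `a ∈ B z`, and with
this every symmetric pair produces another one whose ball is strictly smaller, which is absurd.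
-/

variable {V : Type} {A : V → V → Prop}

lemma mem_inBall_self (A : V → V → Prop) (x : V) : x ∈ inBall A x :=
  Set.mem_insert x _

lemma mem_inBall_of_arc {x y : V} (h : A x y) : x ∈ inBall A y :=
  Set.mem_insert_of_mem y h

lemma arc_of_mem_inBall {x y : V} (h : x ∈ inBall A y) (hne : x ≠ y) : A x y :=
  h.resolve_left hne

lemma TwinFree.inBall_ssubset {x y : V} (htf : TwinFree A) (hsub : inBall A x ⊆ inBall A y)
    (hne : x ≠ y) : inBall A x ⊂ inBall A y :=
  hsub.ssubset_of_ne (htf x y hne)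

lemma Set.eq_insert_or_eq_insert_of_sdiff_singleton_eq {α : Type*} {P Q : Set α} {w : α}
    (h : P \ {w} = Q \ {w}) (hne : P ≠ Q) :
    (P = insert w Q ∧ w ∉ Q) ∨ (Q = insert w P ∧ w ∉ P) := by
  have hP : insert w P = insert w Q := by
    rw [← Set.insert_sdiff_singleton, h, Set.insert_sdiff_singleton]
  by_cases hwP : w ∈ P <;> by_cases hwQ : w ∈ Q
  · exact absurd (by rwa [Set.insert_eq_of_mem hwP, Set.insert_eq_of_mem hwQ] at hP) hne
  · exact .inl ⟨by rw [← hP, Set.insert_eq_of_mem hwP], hwQ⟩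
  · exact .inr ⟨by rw [hP, Set.insert_eq_of_mem hwQ], hwP⟩
  · exact absurd (by rwa [← Set.sdiff_singleton_eq_self hwP, ← Set.sdiff_singleton_eq_self hwQ]) hne

lemma Set.indicator_insert_sub_indicator {α M : Type*} [DecidableEq α] [AddGroup M]
    {T : Set α} {w : α} (hw : w ∉ T) (f : α → M) :
    (insert w T).indicator f - T.indicator f = Pi.single w (f w) := by
  rw [Set.insert_eq, Set.indicator_union_of_disjoint (Set.disjoint_singleton_left.2 hw),
    Set.indicator_singleton]
  ext q
  simp

def IsBallOrEmpty (A : V → V → Prop) (T : Set V) : Prop :=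
  T = ∅ ∨ ∃ y, T = inBall A y

lemma IsBallOrEmpty.exists_eq_inBall {T : Set V} (hT : IsBallOrEmpty A T) {a : V} (ha : a ∈ T) :
    ∃ y, T = inBall A y :=
  hT.resolve_left (Set.nonempty_of_mem ha).ne_empty

lemma exists_inBall_eq_insert_of_not_isIdCode (htf : TwinFree A) {w : V}
    (hw : ¬ IsIdCode A {w}ᶜ) :
    ∃ x T, w ∉ T ∧ IsBallOrEmpty A T ∧ inBall A x = insert w T := by
  simp only [IsIdCode, IsSepCode, not_and_or, not_forall, Set.not_nonempty_iff_eq_empty,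
    not_not] at hw
  rcases hw with ⟨u, hu⟩ | ⟨u, v, huv, huv'⟩
  · have hsub : inBall A u ⊆ {w} := fun q hq => by
      by_contra hqw
      exact hu.subset ⟨hq, hqw⟩
    have huw : u = w := hsub (mem_inBall_self A u)
    subst huw
    refine ⟨u, ∅, Set.notMem_empty u, .inl rfl, ?_⟩
    simpa using hsub.antisymm (Set.singleton_subset_iff.2 (mem_inBall_self A u))
  · rcases Set.eq_insert_or_eq_insert_of_sdiff_singleton_eq huv' (htf u v huv) with
      ⟨hu, hw⟩ | ⟨hv, hw⟩
    · exact ⟨u, _, hw, .inr ⟨v, rfl⟩, hu⟩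
    · exact ⟨v, _, hw, .inr ⟨u, rfl⟩, hv⟩

noncomputable def ballVec (A : V → V → Prop) (x : V) : V → ZMod 2 := (inBall A x).indicator 1

def HasSymmArc (A : V → V → Prop) (a : V) : Prop :=
  ∃ c, a ≠ c ∧ A a c ∧ A c a

structure BallSplitting (A : V → V → Prop) where
  head : V → V
  tail : V → Set V
  notMem_tail : ∀ w, w ∉ tail w
  isBallOrEmpty_tail : ∀ w, IsBallOrEmpty A (tail w)
  inBall_head : ∀ w, inBall A (head w) = insert w (tail w)

lemma BallSplitting.nonempty_of_forall_not_isIdCode (htf : TwinFree A)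
    (h : ∀ w, ¬ IsIdCode A {w}ᶜ) : Nonempty (BallSplitting A) := by
  choose head tail hw hT hx using fun w => exists_inBall_eq_insert_of_not_isIdCode htf (h w)
  exact ⟨⟨head, tail, hw, hT, hx⟩⟩

namespace BallSplitting

theorem mem_inBall_head (S : BallSplitting A) (w : V) : w ∈ inBall A (S.head w) :=
  S.inBall_head w ▸ Set.mem_insert w _

theorem tail_ssubset_inBall_head (S : BallSplitting A) (w : V) :
    S.tail w ⊂ inBall A (S.head w) :=
  S.inBall_head w ▸ Set.ssubset_insert (S.notMem_tail w)

theorem ballVec_head_sub_indicator_tail [DecidableEq V] (S : BallSplitting A) (w : V) :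
    ballVec A (S.head w) - (S.tail w).indicator 1 = Pi.single w 1 := by
  rw [ballVec, S.inBall_head, Set.indicator_insert_sub_indicator (S.notMem_tail w)]
  rfl

theorem top_le_span_ballVec [Finite V] (S : BallSplitting A) :
    ⊤ ≤ Submodule.span (ZMod 2) (Set.range (ballVec A)) := by
  classical
  rw [← (Pi.basisFun (ZMod 2) V).span_eq, Submodule.span_le]
  rintro _ ⟨w, rfl⟩
  rw [Pi.basisFun_apply, ← S.ballVec_head_sub_indicator_tail w]
  refine sub_mem (Submodule.subset_span ⟨S.head w, rfl⟩) ?_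
  rcases S.isBallOrEmpty_tail w with h | ⟨y, h⟩
  · rw [h, Set.indicator_empty']
    exact zero_mem _
  · exact h ▸ Submodule.subset_span ⟨y, rfl⟩

theorem exists_head_eq [Fintype V] (S : BallSplitting A) (z : V) :
    ∃ w ∈ inBall A z, S.head w = z := by
  classical
  -- Read off the `z`-coordinate of `1_{B z} = ∑_{w ∈ B z} e_w` in the basis of ball vectors.
  obtain ⟨β, hβ⟩ : ∃ β : Module.Basis V (ZMod 2) (V → ZMod 2), ⇑β = ballVec A :=
    ⟨_, coe_basisOfTopLeSpanOfCardEqFinrank _ S.top_le_span_ballVec (Module.finrank_pi _).symm⟩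
  have hcoord : ∀ x, β.coord z (ballVec A x) = if x = z then 1 else 0 := fun x => by
    rw [← hβ, Module.Basis.coord_apply, Module.Basis.repr_self, Finsupp.single_apply]
  have hsingle : ∀ w ∈ inBall A z, β.coord z (Pi.single w 1) = if S.head w = z then 1 else 0 := by
    intro w hw
    rw [← S.ballVec_head_sub_indicator_tail w, map_sub, hcoord, sub_eq_self]
    rcases S.isBallOrEmpty_tail w with h | ⟨y, h⟩
    · rw [h, Set.indicator_empty', map_zero]
    · have hyz : y ≠ z := by
        rintro rfl
        exact S.notMem_tail w (h ▸ hw)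
      exact h ▸ (hcoord y).trans (if_neg hyz)
  have hsum : ∑ w ∈ (inBall A z).toFinset, β.coord z (Pi.single w 1) = 1 := by
    have hball : ∑ w ∈ (inBall A z).toFinset, (Pi.single w 1 : V → ZMod 2) = ballVec A z := by
      ext q
      simp [ballVec, Finset.sum_apply, Finset.sum_pi_single, Set.indicator_apply]
    rw [← map_sum, hball, hcoord, if_pos rfl]
  obtain ⟨w, hw, hne⟩ := Finset.exists_ne_zero_of_sum_ne_zero (hsum ▸ one_ne_zero)
  rw [Set.mem_toFinset] at hw
  rw [hsingle w hw] at hne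
  exact ⟨w, hw, by_contra fun h => hne (if_neg h)⟩

theorem inBall_head_subset [Fintype V] (S : BallSplitting A) {a z : V} (ha : a ∈ inBall A z) :
    inBall A (S.head a) ⊆ inBall A z := by
  induction hn : (inBall A z).ncard using Nat.strong_induction_on generalizing z with
  | _ n ih =>
    obtain ⟨w, -, rfl⟩ := S.exists_head_eq z
    rcases S.inBall_head w ▸ ha with rfl | hat
    · exact subset_rfl
    · obtain ⟨y, hy⟩ := (S.isBallOrEmpty_tail w).exists_eq_inBall hat
      have hlt : inBall A y ⊂ inBall A (S.head w) := hy ▸ S.tail_ssubset_inBall_head w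
      exact (ih _ (hn ▸ Set.ncard_lt_ncard hlt) (hy ▸ hat) rfl).trans hlt.subset

theorem exists_hasSymmArc_inBall_ssubset [Fintype V] (S : BallSplitting A) (htf : TwinFree A)
    {a : V} (ha : HasSymmArc A a) : ∃ a', HasSymmArc A a' ∧ inBall A a' ⊂ inBall A a := by
  obtain ⟨c, hne, hac, hca⟩ := ha
  by_cases hx : S.head a = a
  · have hc : c ∈ S.tail a := by
      have := mem_inBall_of_arc hca
      rw [← hx, S.inBall_head] at this
      exact this.resolve_left hne.symm
    obtain ⟨r, hr⟩ := (S.isBallOrEmpty_tail a).exists_eq_inBall hc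
    have hrc : r ≠ c := fun h => S.notMem_tail a (hr ▸ h ▸ mem_inBall_of_arc hac)
    have hrB : r ∈ inBall A c := S.inBall_head_subset (mem_inBall_of_arc hac)
      ((S.tail_ssubset_inBall_head a).subset (hr ▸ mem_inBall_self A r))
    refine ⟨r, ⟨c, hrc, arc_of_mem_inBall hrB hrc, arc_of_mem_inBall (hr ▸ hc) hrc.symm⟩, ?_⟩
    exact hx ▸ hr ▸ S.tail_ssubset_inBall_head a
  · have hxa : inBall A (S.head a) ⊆ inBall A a := S.inBall_head_subset (mem_inBall_self A a)
    refine ⟨S.head a, ⟨a, hx, arc_of_mem_inBall (hxa (mem_inBall_self A _)) hx,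
      arc_of_mem_inBall (S.mem_inBall_head a) (Ne.symm hx)⟩, htf.inBall_ssubset hxa hx⟩

theorem not_hasSymmArc [Fintype V] (S : BallSplitting A) (htf : TwinFree A) (a : V) :
    ¬ HasSymmArc A a := by
  induction hn : (inBall A a).ncard using Nat.strong_induction_on generalizing a with
  | _ n ih =>
    intro ha
    obtain ⟨a', ha', hlt⟩ := S.exists_hasSymmArc_inBall_ssubset htf ha
    exact ih _ (hn ▸ Set.ncard_lt_ncard hlt) a' rfl ha'

end BallSplitting

/-- Every finite twin-free digraph with at least one pair of symmetric arcs admits an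
identifying code of size at most `|V(D)| - 1`. -/
theorem idCode_le_of_symmetric_arc {V : Type} [Fintype V] (A : V → V → Prop)
    (htf : TwinFree A) (hsym : ∃ u v : V, u ≠ v ∧ A u v ∧ A v u) :
    ∃ C : Set V, IsIdCode A C ∧ C.ncard ≤ Fintype.card V - 1 := by
  obtain ⟨w, hw⟩ : ∃ w, IsIdCode A {w}ᶜ := by
    by_contra! hfail
    obtain ⟨S⟩ := BallSplitting.nonempty_of_forall_not_isIdCode htf hfail
    obtain ⟨u, hu⟩ := hsym
    exact S.not_hasSymmArc htf u hu
  refine ⟨{w}ᶜ, hw, ?_⟩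
  rw [Set.ncard_compl, Set.ncard_singleton, Nat.card_eq_fintype_card]
end

section
/- Let X be a finite set and 𝒜 a family of distinct nonempty subsets of X with |𝒜| = |X|, such that the incidence bipartite graph B(𝒜, X) admits no perfect matching. Then (𝒜, X) is not extremal: there exists x₀ ∈ X such that the sets A \ {x₀} for A ∈ 𝒜 are all distinct and nonempty. -/
/-!
Suppose no `x₀` can be deleted. Then every `x` lies in some `B ∈ 𝒜` with `B \ {x}` empty or
again in `𝒜`, so the unit vector `e_x` is the difference of the indicator vectors of `B` and
`B \ {x}`. By Hall's theorem some subfamily of `𝒜` has a union `Y` smaller than itself; hence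
the vectors `e_y` (`y ∈ Y`) together with the indicator vectors of the members of `𝒜` not
contained in `Y` number fewer than `|𝒜| = |X|`. Yet they span `ℚ^X`: for `x ∉ Y` the set `B`
above is not contained in `Y`, and `B \ {x}` is either contained in `Y` or another member of
`𝒜` not contained in `Y`.
-/

open Finset

variable {X : Type*} [DecidableEq X]

def indicatorVec (K : Type*) [Semiring K] (A : Finset X) : X → K :=
  ∑ a ∈ A, Pi.single a 1

section

variable {K : Type*} [Ring K]

lemma indicatorVec_sub_indicatorVec_erase {B : Finset X} {x : X} (hx : x ∈ B) :
    indicatorVec K B - indicatorVec K (B.erase x) = Pi.single x 1 := by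
  rw [indicatorVec, ← add_sum_erase B _ hx, indicatorVec, add_sub_cancel_right]

lemma single_mem_of_forall_notMem {Y : Finset X} {𝒩 : Finset (Finset X)}
    (h : ∀ x ∉ Y, ∃ B ∈ 𝒩, x ∈ B ∧ (B.erase x ⊆ Y ∨ B.erase x ∈ 𝒩))
    {V : Submodule K (X → K)} (hY : ∀ y ∈ Y, Pi.single y 1 ∈ V)
    (h𝒩 : ∀ A ∈ 𝒩, indicatorVec K A ∈ V) (x : X) :
    Pi.single x 1 ∈ V := by
  by_cases hx : x ∈ Y
  · exact hY x hx
  obtain ⟨B, hB, hxB, hB'⟩ := h x hx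
  have hsubY : ∀ A ⊆ Y, indicatorVec K A ∈ V := fun A hA =>
    Submodule.sum_mem _ fun a ha => hY a (hA ha)
  rw [← indicatorVec_sub_indicatorVec_erase hxB]
  exact V.sub_mem (h𝒩 B hB) (hB'.elim (hsubY _) (h𝒩 _))

end

lemma card_le_card_add_card_of_forall_notMem [Fintype X]
    (Y : Finset X) (𝒩 : Finset (Finset X))
    (h : ∀ x ∉ Y, ∃ B ∈ 𝒩, x ∈ B ∧ (B.erase x ⊆ Y ∨ B.erase x ∈ 𝒩)) :
    Fintype.card X ≤ #𝒩 + #Y := by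
  classical
  set S := Y.image (Pi.single · (1 : ℚ)) ∪ 𝒩.image (indicatorVec ℚ)
  have hspan : Submodule.span ℚ (S : Set (X → ℚ)) = ⊤ := by
    rw [eq_top_iff, ← (Pi.basisFun ℚ X).span_eq, Submodule.span_le]
    rintro _ ⟨x, rfl⟩
    rw [Pi.basisFun_apply]
    exact single_mem_of_forall_notMem h
      (fun y hy => Submodule.subset_span (mem_union_left _ (mem_image_of_mem _ hy)))
      (fun A hA => Submodule.subset_span (mem_union_right _ (mem_image_of_mem _ hA))) x
  calc Fintype.card X = Set.finrank ℚ (S : Set (X → ℚ)) := by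
        rw [Set.finrank, hspan, finrank_top, Module.finrank_fintype_fun_eq_card]
    _ ≤ #S := finrank_span_finset_le_card S
    _ ≤ #(Y.image (Pi.single · (1 : ℚ))) + #(𝒩.image (indicatorVec ℚ)) :=
        card_union_le _ _
    _ ≤ #𝒩 + #Y := by grind [card_image_le]

lemma card_le_card_filter_not_subset_add_card [Fintype X] {𝒜 : Finset (Finset X)}
    (h : ∀ x, ∃ B ∈ 𝒜, x ∈ B ∧ B.erase x ∈ insert ∅ 𝒜) (Y : Finset X) :
    Fintype.card X ≤ #{A ∈ 𝒜 | ¬A ⊆ Y} + #Y := by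
  refine card_le_card_add_card_of_forall_notMem Y _ fun x hx => ?_
  obtain ⟨B, hB, hxB, hB'⟩ := h x
  refine ⟨B, mem_filter.2 ⟨hB, fun hBY => hx (hBY hxB)⟩, hxB, ?_⟩
  rcases mem_insert.1 hB' with hempty | hmem
  · exact Or.inl (hempty ▸ empty_subset Y)
  · by_cases hY : B.erase x ⊆ Y
    · exact Or.inl hY
    · exact Or.inr (mem_filter.2 ⟨hmem, hY⟩)

lemma exists_card_filter_not_subset_add_card_lt {𝒜 : Finset (Finset X)}
    (h : ¬∃ f : {A // A ∈ 𝒜} → X, Function.Injective f ∧ ∀ A, f A ∈ A.1) :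
    ∃ Y : Finset X, #{A ∈ 𝒜 | ¬A ⊆ Y} + #Y < #𝒜 := by
  obtain ⟨s, hs⟩ : ∃ s : Finset {A // A ∈ 𝒜}, #(s.biUnion Subtype.val) < #s := by
    by_contra! hall
    exact h ((all_card_le_biUnion_card_iff_exists_injective _).1 hall)
  refine ⟨s.biUnion Subtype.val, ?_⟩
  have hs_le : #s ≤ #{A ∈ 𝒜 | A ⊆ s.biUnion Subtype.val} :=
    card_le_card_of_injOn Subtype.val
      (fun A hA => mem_filter.2 ⟨A.2, subset_biUnion_of_mem Subtype.val hA⟩)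
      Subtype.val_injective.injOn
  have := card_filter_add_card_filter_not (s := 𝒜) (· ⊆ s.biUnion Subtype.val)
  omega

lemma sdiff_singleton_nonempty_of_erase_ne_empty {𝒜 : Finset (Finset X)} {x : X}
    (hne : ∀ A ∈ 𝒜, A.Nonempty) (h : ∀ B ∈ 𝒜, x ∈ B → B.erase x ≠ ∅) :
    ∀ A ∈ 𝒜, (A \ {x}).Nonempty := by
  intro A hA
  rw [sdiff_singleton_eq_erase, nonempty_iff_ne_empty]
  by_cases hx : x ∈ A
  · exact h A hA hx
  · rw [erase_eq_of_notMem hx]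
    exact (hne A hA).ne_empty

lemma injOn_sdiff_singleton_of_erase_notMem {𝒜 : Finset (Finset X)} {x : X}
    (h : ∀ B ∈ 𝒜, x ∈ B → B.erase x ∉ 𝒜) :
    Set.InjOn (fun A : Finset X => A \ {x}) ↑𝒜 := by
  intro A hA B hB hAB
  simp only [sdiff_singleton_eq_erase] at hAB
  by_cases hxA : x ∈ A <;> by_cases hxB : x ∈ B
  · rw [← insert_erase hxA, hAB, insert_erase hxB]
  · exact absurd ((hAB.trans (erase_eq_of_notMem hxB)) ▸ hB) (h A hA hxA)
  · exact absurd ((hAB.symm.trans (erase_eq_of_notMem hxA)) ▸ hA) (h B hB hxB)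
  · rwa [erase_eq_of_notMem hxA, erase_eq_of_notMem hxB] at hAB

/-- Let `(𝒜, X)` be a set system of distinct nonempty subsets with `|𝒜| = |X|` whose
incidence bipartite graph has no perfect matching (no injective choice function picking
an element from each member of `𝒜`). Then `(𝒜, X)` is not extremal: some `x₀ ∈ X` can be
deleted keeping the sets `A \ {x₀}` distinct and nonempty. -/
theorem not_extremal_of_no_matching {X : Type} [Fintype X] [DecidableEq X]
    (𝒜 : Finset (Finset X)) (hcard : 𝒜.card = Fintype.card X)
    (hne : ∀ A ∈ 𝒜, A.Nonempty)
    (hnm : ¬ ∃ f : {A // A ∈ 𝒜} → X, Function.Injective f ∧ ∀ A, f A ∈ A.1) :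
    ∃ x₀ : X, (∀ A ∈ 𝒜, (A \ {x₀}).Nonempty) ∧
      Set.InjOn (fun A : Finset X => A \ {x₀}) ↑𝒜 := by
  by_contra! hextremal
  have hcritical : ∀ x, ∃ B ∈ 𝒜, x ∈ B ∧ B.erase x ∈ insert ∅ 𝒜 := by
    intro x
    by_contra! hx
    refine hextremal x (sdiff_singleton_nonempty_of_erase_ne_empty hne fun B hB hxB => ?_)
      (injOn_sdiff_singleton_of_erase_notMem fun B hB hxB => ?_)
    · exact fun hempty => hx B hB hxB (hempty ▸ mem_insert_self ∅ 𝒜)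
    · exact fun hmem => hx B hB hxB (mem_insert_of_mem hmem)
  obtain ⟨Y, hY⟩ := exists_card_filter_not_subset_add_card_lt hnm
  have := card_le_card_filter_not_subset_add_card hcritical Y
  omega
end

section
/- Let H be an oriented graph and D a digraph in the family Ψ(H), constructed by replacing each source vertex x of H by a finite-source transitive tree T_x, each non-source vertex by an infinite-source transitive tree T_x, and for each arc x→y of H choosing a subset V_{x→y} ⊆ V(T_x) and adding all arcs from every vertex of V_{x→y} to every vertex of T_y. Then the only identifying code of D is its whole vertex set. -/
/-- An oriented graph is a *source transitive tree* if every closed in-ball `B₁⁺(x)`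
induces the transitive closure of a directed path `P_x = B₁⁺(x)` ending at `x` (the
induced relation is a strict total order with greatest element `x`), any two such paths
intersect in a path `P_z`, and either all the paths are finite (fst-tree) or all are
infinite with each vertex having finitely many successors on its path (ist-tree). -/
def IsSourceTransTree {V : Type} (A : V → V → Prop) : Prop :=
  (∀ x y : V, ¬ (A x y ∧ A y x)) ∧
  (∀ x : V, ∀ y ∈ inBall A x, ∀ z ∈ inBall A x, y ≠ z → A y z ∨ A z y) ∧
  (∀ x : V, ∀ y ∈ inBall A x, ∀ z ∈ inBall A x, ∀ w ∈ inBall A x,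
    A y z → A z w → A y w) ∧
  (∀ x y : V, ∃ z : V, inBall A x ∩ inBall A y = inBall A z) ∧
  ((∀ x : V, (inBall A x).Finite) ∨
    (∀ x : V, (inBall A x).Infinite ∧
      ∀ y ∈ inBall A x, {z ∈ inBall A x | A y z}.Finite))

/-!
Suppose a vertex `u` of the tree `T_i` is not in the code `C`. Every vertex of `T_i` receives
the same arcs from outside `T_i`, so it suffices to find `m ≠ u` in `T_i` whose in-ball meets `C`
inside `T_i` in the same set as that of `u`. If `T_i` is an ist-tree, take for `m` the
predecessor of `u` on `P_u`: then `B⁺(m) = B⁺(u) \ {u}`. If `T_i` is an fst-tree, then `i` is a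
source of `H`, so `B⁺(u) ∩ C` is a nonempty finite chain inside `T_i`, and `m` is its top.
-/

theorem mem_inBall {V : Type} {A : V → V → Prop} {x w : V} :
    w ∈ inBall A x ↔ w = x ∨ A w x :=
  Set.mem_insert_iff

theorem self_mem_inBall {V : Type} (A : V → V → Prop) (x : V) : x ∈ inBall A x :=
  Set.mem_insert _ _

theorem exists_maximal_of_finite_successors {V : Type} {r : V → V → Prop} {T : Set V}
    (hne : T.Nonempty) (hirr : ∀ a ∈ T, ¬ r a a)
    (htrans : ∀ a ∈ T, ∀ b ∈ T, ∀ c ∈ T, r a b → r b c → r a c)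
    (hsucc : ∀ y ∈ T, {z ∈ T | r y z}.Finite) :
    ∃ m ∈ T, ∀ z ∈ T, ¬ r m z := by
  -- Take `m` with fewest successors: a successor of `m` would have strictly fewer.
  obtain ⟨m, hmT, hmin⟩ :=
    (InvImage.wf (fun y => {z ∈ T | r y z}.ncard) wellFounded_lt).has_min T hne
  refine ⟨m, hmT, fun c hcT hmc => hmin c hcT (Set.ncard_lt_ncard ?_ (hsucc m hmT))⟩
  refine (Set.ssubset_iff_of_subset ?_).2 ⟨c, ⟨hcT, hmc⟩, fun hc => hirr c hcT hc.2⟩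
  exact fun z ⟨hzT, hcz⟩ => ⟨hzT, htrans m hmT c hcT z hzT hmc hcz⟩

namespace IsSourceTransTree

variable {V : Type} {A : V → V → Prop}

theorem irrefl (hA : IsSourceTransTree A) (x : V) : ¬ A x x :=
  fun h => hA.1 x x ⟨h, h⟩

theorem inBall_subset (hA : IsSourceTransTree A) {x y : V} (hy : y ∈ inBall A x) :
    inBall A y ⊆ inBall A x := by
  obtain ⟨z, hz⟩ := hA.2.2.2.1 x y
  have hyz : y ∈ inBall A z := hz ▸ ⟨hy, self_mem_inBall A y⟩
  have hzy : z ∈ inBall A y := (hz ▸ self_mem_inBall A z : z ∈ inBall A x ∩ inBall A y).2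
  have hyz_eq : y = z := by
    rcases mem_inBall.1 hyz with h | h
    · exact h
    · rcases mem_inBall.1 hzy with h' | h'
      · exact h'.symm
      · exact absurd ⟨h, h'⟩ (hA.1 y z)
  subst hyz_eq
  exact fun w hw => (hz.symm ▸ hw : w ∈ inBall A x ∩ inBall A y).1

theorem inBall_inter_eq_of_forall_not_rel (hA : IsSourceTransTree A) {C : Set V} {x m : V}
    (hm : m ∈ inBall A x) (hmax : ∀ z ∈ inBall A x ∩ C, ¬ A m z) :
    inBall A x ∩ C = inBall A m ∩ C := by
  refine Set.Subset.antisymm (fun z hz => ⟨?_, hz.2⟩)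
    (Set.inter_subset_inter_left C (hA.inBall_subset hm))
  by_cases hzm : z = m
  · exact hzm ▸ self_mem_inBall A z
  · rcases hA.2.1 x z hz.1 m hm hzm with h | h
    · exact mem_inBall.2 (Or.inr h)
    · exact absurd h (hmax z hz)

theorem exists_ne_inBall_inter_eq (hA : IsSourceTransTree A) {C : Set V} {u : V} (hu : u ∉ C)
    (hdom : (inBall A u).Finite → (inBall A u ∩ C).Nonempty) :
    ∃ m, m ≠ u ∧ inBall A u ∩ C = inBall A m ∩ C := by
  have hirr : ∀ T ⊆ inBall A u, ∀ a ∈ T, ¬ A a a := fun _ _ a _ => hA.irrefl a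
  have htrans : ∀ T ⊆ inBall A u, ∀ a ∈ T, ∀ b ∈ T, ∀ c ∈ T, A a b → A b c → A a c :=
    fun _ hT a ha b hb c hc => hA.2.2.1 u a (hT ha) b (hT hb) c (hT hc)
  rcases hA.2.2.2.2 with hfin | hinf
  · obtain ⟨m, hm, hmax⟩ := exists_maximal_of_finite_successors (hdom (hfin u))
      (hirr _ Set.inter_subset_left) (htrans _ Set.inter_subset_left)
      fun _ _ => (hfin u).subset (Set.inter_subset_left.trans' (Set.sep_subset _ _))
    exact ⟨m, fun h => hu (h ▸ hm.2), hA.inBall_inter_eq_of_forall_not_rel hm.1 hmax⟩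
  · -- `m` is the predecessor of `u` on `P_u`.
    obtain ⟨m, hm, hmax⟩ := exists_maximal_of_finite_successors
      ((hinf u).1.sdiff (Set.finite_singleton u)).nonempty
      (hirr _ Set.sdiff_subset) (htrans _ Set.sdiff_subset)
      fun y hy => ((hinf u).2 y hy.1).subset fun z hz => ⟨hz.1.1, hz.2⟩
    refine ⟨m, hm.2, hA.inBall_inter_eq_of_forall_not_rel hm.1 fun z hz => hmax z ⟨hz.1, ?_⟩⟩
    exact fun hzu => hu ((Set.mem_singleton_iff.1 hzu) ▸ hz.2)

end IsSourceTransTree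

section Sigma

variable {I : Type} {V : I → Type} {DA : (Σ i, V i) → (Σ i, V i) → Prop} {i : I}
  {A : V i → V i → Prop}

theorem mem_inBall_mk_iff (hDin : ∀ u v : V i, DA ⟨i, u⟩ ⟨i, v⟩ ↔ A u v) {x w : V i} :
    (⟨i, w⟩ : Σ i, V i) ∈ inBall DA ⟨i, x⟩ ↔ w ∈ inBall A x := by
  simp only [mem_inBall, Sigma.mk.inj_iff, heq_eq_eq, true_and, hDin]

theorem rel_of_mem_inBall_of_fst_ne {p : Σ i, V i} {x : V i} (hp : p ∈ inBall DA ⟨i, x⟩)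
    (hpi : p.1 ≠ i) : DA p ⟨i, x⟩ :=
  (mem_inBall.1 hp).resolve_left fun h => hpi (congrArg Sigma.fst h)

theorem inBall_inter_eq_of_fiber (hDin : ∀ u v : V i, DA ⟨i, u⟩ ⟨i, v⟩ ↔ A u v)
    (hcross : ∀ j, j ≠ i → ∀ (w : V j) (x y : V i), DA ⟨j, w⟩ ⟨i, x⟩ → DA ⟨j, w⟩ ⟨i, y⟩)
    {C : Set (Σ i, V i)} {x y : V i}
    (h : inBall A x ∩ Sigma.mk i ⁻¹' C = inBall A y ∩ Sigma.mk i ⁻¹' C) :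
    inBall DA ⟨i, x⟩ ∩ C = inBall DA ⟨i, y⟩ ∩ C := by
  have key : ∀ x y : V i, inBall A x ∩ Sigma.mk i ⁻¹' C = inBall A y ∩ Sigma.mk i ⁻¹' C →
      inBall DA ⟨i, x⟩ ∩ C ⊆ inBall DA ⟨i, y⟩ ∩ C := by
    rintro x y h ⟨j, w⟩ ⟨hw, hwC⟩
    refine ⟨?_, hwC⟩
    obtain rfl | hj := eq_or_ne j i
    · have hw' : w ∈ inBall A y ∩ Sigma.mk j ⁻¹' C := h ▸ ⟨(mem_inBall_mk_iff hDin).1 hw, hwC⟩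
      exact (mem_inBall_mk_iff hDin).2 hw'.1
    · exact mem_inBall.2 (Or.inr (hcross j hj w x y (rel_of_mem_inBall_of_fst_ne hw hj)))
  exact (key x y h).antisymm (key y x h.symm)

end Sigma

theorem psi_only_idCode_univ_general {I : Type} (H : I → I → Prop)
    (V : I → Type)
    (A : ∀ i, V i → V i → Prop)
    (hSTT : ∀ i, IsSourceTransTree (A i))
    (hist : ∀ i, (∃ j, H j i) → ∀ u : V i, (inBall (A i) u).Infinite)
    (S : ∀ i j : I, Set (V i))
    (DA : (Σ i, V i) → (Σ i, V i) → Prop)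
    (hDin : ∀ i (u v : V i), DA ⟨i, u⟩ ⟨i, v⟩ ↔ A i u v)
    (hDcross : ∀ i j : I, i ≠ j → ∀ (u : V i) (v : V j),
      DA ⟨i, u⟩ ⟨j, v⟩ ↔ (H i j ∧ u ∈ S i j)) :
    ∀ C : Set (Σ i, V i), IsIdCode DA C → C = Set.univ := by
  intro C hC
  refine Set.eq_univ_of_forall fun ⟨i, u⟩ => by_contra fun huC => ?_
  have hcross : ∀ j, j ≠ i → ∀ (w : V j) (x y : V i), DA ⟨j, w⟩ ⟨i, x⟩ → DA ⟨j, w⟩ ⟨i, y⟩ :=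
    fun j hj w x y h => (hDcross j i hj w y).2 ((hDcross j i hj w x).1 h)
  have hdom : (inBall (A i) u).Finite → (inBall (A i) u ∩ Sigma.mk i ⁻¹' C).Nonempty := by
    intro hfin
    obtain ⟨⟨j, w⟩, hw, hwC⟩ := hC.1 ⟨i, u⟩
    obtain rfl | hj := eq_or_ne j i
    · exact ⟨w, (mem_inBall_mk_iff (hDin j)).1 hw, hwC⟩
    · have hji : H j i := ((hDcross j i hj w u).1 (rel_of_mem_inBall_of_fst_ne hw hj)).1
      exact absurd hfin (hist i ⟨j, hji⟩ u)
  obtain ⟨m, hmu, hm⟩ := (hSTT i).exists_ne_inBall_inter_eq huC hdom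
  exact hC.2 _ _ (by simpa using hmu.symm) (inBall_inter_eq_of_fiber (hDin i) hcross hm)

/-- Let `H` be an oriented graph and let `D ∈ Ψ(H)` be built by replacing each source
vertex `i` of `H` by an fst-tree `(V i, A i)`, each non-source vertex by an ist-tree, and,
for each arc `i → j` of `H`, adding all arcs from a chosen set `S i j ⊆ V i` to all of
`V j`. Then the only identifying code of `D` is its whole vertex set. -/
theorem psi_only_idCode_univ {I : Type} (H : I → I → Prop)
    (hH : ∀ i j : I, ¬ (H i j ∧ H j i))
    (V : I → Type) [Countable (Σ i, V i)]
    (A : ∀ i, V i → V i → Prop)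
    (hSTT : ∀ i, IsSourceTransTree (A i))
    (hfst : ∀ i, (∀ j, ¬ H j i) → ∀ u : V i, (inBall (A i) u).Finite)
    (hist : ∀ i, (∃ j, H j i) → ∀ u : V i, (inBall (A i) u).Infinite)
    (S : ∀ i j : I, Set (V i))
    (DA : (Σ i, V i) → (Σ i, V i) → Prop)
    (hDin : ∀ i (u v : V i), DA ⟨i, u⟩ ⟨i, v⟩ ↔ A i u v)
    (hDcross : ∀ i j : I, i ≠ j → ∀ (u : V i) (v : V j),
      DA ⟨i, u⟩ ⟨j, v⟩ ↔ (H i j ∧ u ∈ S i j)) :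
    ∀ C : Set (Σ i, V i), IsIdCode DA C → C = Set.univ :=
  psi_only_idCode_univ_general H V A hSTT hist S DA hDin hDcross
end
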